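/- arXiv:2208.13756 — 5 statements merged into one kernel-verified Lean document; each statement's English description precedes it below -/
import Mathlib

section
/- Let H be a real Hilbert space and T a strongly continuous one-parameter operator semigroup on H with ‖T(t)‖ ≤ M e^{a t} for all t ≥ 0 (M ≥ 1, a ∈ ℝ). Let ρ > 0, β > 0, and let φ : [0,∞) → ℝ be continuous with φ(0) = 1 and 0 < φ(t) ≤ e^{−ρt} for all t ≥ 0. Let n ∈ ℕ, k, i ∈ {2,3}, and let t_j be a real number with (n+1)β ≤ t_j < (n+2)β. Then for all h, g ∈ H, |(1/β)∫₀^β e^{kρβ} φ((n+i)β + s − t_j) ⟨T(β−s)h, g⟩ ds − ⟨h, g⟩| ≤ ‖g‖ ( ‖h‖ M max_{s∈[(i−2)β, iβ]} |e^{kρβ}φ(s) − 1| · 𝐞(aβ) + sup_{s∈[0,β]} ‖T(s)h − h‖ ). -/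
open scoped Classical RealInnerProductSpace
open Real MeasureTheory

noncomputable def ee (t : ℝ) : ℝ := if t = 0 then 1 else (Real.exp t - 1) / t

/-!
Split the integrand as `(ψ s - 1) ⟪T (β - s) h, g⟫ + ⟪T (β - s) h - h, g⟫` with
`ψ s = e^{kρβ} φ((n+i)β + s - t_j)`. The first term is at most `‖g‖ ‖h‖ C M e^{a(β-s)}`, where `C`
bounds `|ψ - 1|`, and the second at most `‖g‖ D` with `D = sup_{[0,β]} ‖T(s)h - h‖`; averaging over
`[0, β]` and `∫₀^β e^{a(β-s)} ds = β 𝐞(aβ)` give the estimate. Since `i ≥ 2`, the argument of `φ`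
ranges in `[(i-2)β, iβ] ⊆ [0, ∞)`, where `φ` is continuous, so the suprema are finite.
-/

theorem integral_exp_mul_eq_mul_ee (a β : ℝ) :
    ∫ t in (0:ℝ)..β, exp (a * t) = β * ee (a * β) := by
  by_cases ha : a = 0
  · simp [ha, ee]
  by_cases hβ : β = 0
  · simp [hβ]
  rw [intervalIntegral.integral_comp_mul_left (fun t => exp t) ha, integral_exp,
    ee, if_neg (mul_ne_zero ha hβ), mul_zero, exp_zero, smul_eq_mul]
  field_simp

theorem integral_exp_mul_sub_eq_mul_ee (a β : ℝ) :
    ∫ s in (0:ℝ)..β, exp (a * (β - s)) = β * ee (a * β) := by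
  simpa using (intervalIntegral.integral_comp_sub_left (fun t => exp (a * t)) β).trans
    (by simpa using integral_exp_mul_eq_mul_ee a β)

theorem ContinuousOn.le_ciSup_Icc {f : ℝ → ℝ} {a b s : ℝ} (hf : ContinuousOn f (Set.Icc a b))
    (hs : s ∈ Set.Icc a b) : f s ≤ ⨆ x : Set.Icc a b, f x := by
  have hbdd : BddAbove (Set.range fun x : Set.Icc a b => f x) := by
    simpa only [Set.image_eq_range] using isCompact_Icc.bddAbove_image hf
  exact le_ciSup hbdd ⟨s, hs⟩

theorem abs_mul_inner_sub_inner_le {H : Type*} [NormedAddCommGroup H] [InnerProductSpace ℝ H]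
    (c : ℝ) (x h g : H) :
    |c * ⟪x, g⟫ - ⟪h, g⟫| ≤ ‖g‖ * (|c - 1| * ‖x‖ + ‖x - h‖) := by
  have hsplit : c * ⟪x, g⟫ - ⟪h, g⟫ = (c - 1) * ⟪x, g⟫ + ⟪x - h, g⟫ := by
    rw [inner_sub_left]; ring
  calc |c * ⟪x, g⟫ - ⟪h, g⟫| ≤ |c - 1| * |⟪x, g⟫| + |⟪x - h, g⟫| := by
        rw [hsplit, ← abs_mul]; exact abs_add_le _ _
    _ ≤ |c - 1| * (‖x‖ * ‖g‖) + ‖x - h‖ * ‖g‖ := by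
        gcongr <;> exact abs_real_inner_le_norm _ _
    _ = ‖g‖ * (|c - 1| * ‖x‖ + ‖x - h‖) := by ring

theorem abs_average_sub_le {F G : ℝ → ℝ} {a b c : ℝ} (hab : a < b)
    (hF : IntervalIntegrable F volume a b) (hG : IntervalIntegrable G volume a b)
    (hFG : ∀ s ∈ Set.Icc a b, |F s - c| ≤ G s) :
    |1 / (b - a) * (∫ s in a..b, F s) - c| ≤ 1 / (b - a) * ∫ s in a..b, G s := by
  have hba : 0 < b - a := sub_pos.mpr hab
  have hrw : 1 / (b - a) * (∫ s in a..b, F s) - c = 1 / (b - a) * ∫ s in a..b, (F s - c) := by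
    rw [intervalIntegral.integral_sub hF intervalIntegrable_const,
      intervalIntegral.integral_const, smul_eq_mul]
    field_simp
  rw [hrw, abs_mul, abs_of_pos (by positivity)]
  gcongr
  exact intervalIntegral.norm_integral_le_of_norm_le (f := fun s => F s - c) hab.le
    (Filter.Eventually.of_forall fun s hs => hFG s (Set.Ioc_subset_Icc_self hs)) hG

theorem abs_average_mul_inner_sub_le {H : Type*} [NormedAddCommGroup H] [InnerProductSpace ℝ H]
    {T : ℝ → H →L[ℝ] H} {M a β C D : ℝ} {ψ : ℝ → ℝ} {h : H} (hβ : 0 < β)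
    (hTcont : ContinuousOn (fun t => T t h) (Set.Icc 0 β))
    (hTbound : ∀ t ∈ Set.Icc 0 β, ‖T t‖ ≤ M * exp (a * t))
    (hψ : ContinuousOn ψ (Set.Icc 0 β)) (hC : ∀ s ∈ Set.Icc 0 β, |ψ s - 1| ≤ C)
    (hD : ∀ t ∈ Set.Icc 0 β, ‖T t h - h‖ ≤ D) (g : H) :
    |1 / β * (∫ s in (0:ℝ)..β, ψ s * ⟪T (β - s) h, g⟫) - ⟪h, g⟫|
      ≤ ‖g‖ * (‖h‖ * M * C * ee (a * β) + D) := by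
  have hC0 : 0 ≤ C := (abs_nonneg _).trans (hC 0 ⟨le_rfl, hβ.le⟩)
  have hflip : ∀ s ∈ Set.Icc 0 β, β - s ∈ Set.Icc 0 β := fun s hs =>
    ⟨by linarith [hs.2], by linarith [hs.1]⟩
  have hcont : ContinuousOn (fun s => ψ s * ⟪T (β - s) h, g⟫) (Set.Icc 0 β) :=
    hψ.mul ((hTcont.comp (continuous_const.sub continuous_id).continuousOn hflip).inner
      continuousOn_const)
  have hpointwise : ∀ s ∈ Set.Icc 0 β, |ψ s * ⟪T (β - s) h, g⟫ - ⟪h, g⟫|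
      ≤ ‖g‖ * C * M * ‖h‖ * exp (a * (β - s)) + ‖g‖ * D := by
    intro s hs
    have hTs : ‖T (β - s) h‖ ≤ M * exp (a * (β - s)) * ‖h‖ :=
      (T (β - s)).le_of_opNorm_le (hTbound _ (hflip s hs)) h
    calc _ ≤ ‖g‖ * (|ψ s - 1| * ‖T (β - s) h‖ + ‖T (β - s) h - h‖) :=
          abs_mul_inner_sub_inner_le _ _ _ _
      _ ≤ ‖g‖ * (C * (M * exp (a * (β - s)) * ‖h‖) + D) := by
          gcongr
          exacts [hC s hs, hD _ (hflip s hs)]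
      _ = _ := by ring
  have hintegral : ∫ s in (0:ℝ)..β, (‖g‖ * C * M * ‖h‖ * exp (a * (β - s)) + ‖g‖ * D)
      = ‖g‖ * C * M * ‖h‖ * (β * ee (a * β)) + β * (‖g‖ * D) := by
    rw [intervalIntegral.integral_add (Continuous.intervalIntegrable (by fun_prop) _ _)
      intervalIntegrable_const,
      intervalIntegral.integral_const_mul, integral_exp_mul_sub_eq_mul_ee,
      intervalIntegral.integral_const, smul_eq_mul, sub_zero]
  have haverage := abs_average_sub_le hβ (hcont.intervalIntegrable_of_Icc hβ.le)
    (Continuous.intervalIntegrable (by fun_prop) _ _) hpointwise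
  rw [sub_zero, hintegral] at haverage
  convert haverage using 1
  field_simp

theorem statement2_general
    {H : Type*} [NormedAddCommGroup H] [InnerProductSpace ℝ H]
    (T : ℝ → H →L[ℝ] H)
    (hTcont : ∀ v : H, ContinuousOn (fun t => T t v) (Set.Ici 0))
    (M a : ℝ)
    (hTbound : ∀ t : ℝ, 0 ≤ t → ‖T t‖ ≤ M * Real.exp (a * t))
    (ρ β : ℝ) (hβ : 0 < β)
    (φ : ℝ → ℝ) (hφcont : ContinuousOn φ (Set.Ici 0))
    (n k i : ℕ) (hi : i = 2 ∨ i = 3)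
    (tj : ℝ) (htj1 : ((n:ℝ) + 1) * β ≤ tj) (htj2 : tj < ((n:ℝ) + 2) * β)
    (h g : H) :
    |(1 / β) * (∫ s in (0:ℝ)..β,
        Real.exp ((k:ℝ) * ρ * β) * φ (((n:ℝ) + (i:ℝ)) * β + s - tj)
          * ⟪T (β - s) h, g⟫)
      - ⟪h, g⟫|
    ≤ ‖g‖ * (‖h‖ * M
        * (⨆ s : Set.Icc (((i:ℝ) - 2) * β) ((i:ℝ) * β),
            |Real.exp ((k:ℝ) * ρ * β) * φ (s:ℝ) - 1|)
        * ee (a * β)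
        + ⨆ s : Set.Icc (0:ℝ) β, ‖T (s:ℝ) h - h‖) := by
  have hi2 : (2:ℝ) ≤ i := by rcases hi with rfl | rfl <;> norm_num
  have hIcc_nonneg : Set.Icc (((i:ℝ) - 2) * β) (i * β) ⊆ Set.Ici 0 := fun x hx =>
    le_trans (by nlinarith) hx.1
  have hshift : ∀ s ∈ Set.Icc 0 β, ((n:ℝ) + i) * β + s - tj ∈ Set.Icc ((i - 2) * β) (i * β) :=
    fun s hs => ⟨by nlinarith [hs.1], by nlinarith [hs.2]⟩
  have hφIcc : ContinuousOn φ (Set.Icc (((i:ℝ) - 2) * β) (i * β)) := hφcont.mono hIcc_nonneg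
  have hTIcc : ContinuousOn (fun t => T t h) (Set.Icc 0 β) :=
    (hTcont h).mono Set.Icc_subset_Ici_self
  refine abs_average_mul_inner_sub_le hβ hTIcc (fun t ht => hTbound t ht.1)
    (continuousOn_const.mul (hφIcc.comp (by fun_prop) hshift)) (fun s hs => ?_)
    (fun t ht => (hTIcc.sub continuousOn_const).norm.le_ciSup_Icc ht) g
  exact ((continuousOn_const.mul hφIcc).sub continuousOn_const).abs.le_ciSup_Icc (hshift s hs)

theorem statement2
    {H : Type*} [NormedAddCommGroup H] [InnerProductSpace ℝ H] [CompleteSpace H]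
    (T : ℝ → H →L[ℝ] H)
    (hT0 : T 0 = ContinuousLinearMap.id ℝ H)
    (hTadd : ∀ t s : ℝ, 0 ≤ t → 0 ≤ s → T (t + s) = (T t).comp (T s))
    (hTcont : ∀ v : H, ContinuousOn (fun t => T t v) (Set.Ici 0))
    (M a : ℝ) (hM : 1 ≤ M)
    (hTbound : ∀ t : ℝ, 0 ≤ t → ‖T t‖ ≤ M * Real.exp (a * t))
    (ρ β : ℝ) (hρ : 0 < ρ) (hβ : 0 < β)
    (φ : ℝ → ℝ) (hφcont : ContinuousOn φ (Set.Ici 0)) (hφ0 : φ 0 = 1)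
    (hφpos : ∀ t : ℝ, 0 ≤ t → 0 < φ t)
    (hφdec : ∀ t : ℝ, 0 ≤ t → φ t ≤ Real.exp (-ρ * t))
    (n k i : ℕ) (hk : k = 2 ∨ k = 3) (hi : i = 2 ∨ i = 3)
    (tj : ℝ) (htj1 : ((n:ℝ) + 1) * β ≤ tj) (htj2 : tj < ((n:ℝ) + 2) * β)
    (h g : H) :
    |(1 / β) * (∫ s in (0:ℝ)..β,
        Real.exp ((k:ℝ) * ρ * β) * φ (((n:ℝ) + (i:ℝ)) * β + s - tj)
          * ⟪T (β - s) h, g⟫)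
      - ⟪h, g⟫|
    ≤ ‖g‖ * (‖h‖ * M
        * (⨆ s : Set.Icc (((i:ℝ) - 2) * β) ((i:ℝ) * β),
            |Real.exp ((k:ℝ) * ρ * β) * φ (s:ℝ) - 1|)
        * ee (a * β)
        + ⨆ s : Set.Icc (0:ℝ) β, ‖T (s:ℝ) h - h‖) :=
  statement2_general T hTcont M a hTbound ρ β hβ φ hφcont n k i hi tj htj1 htj2 h g
end

section
/- Let H be a real Hilbert space and T a strongly continuous one-parameter operator semigroup on H with ‖T(t)‖ ≤ M e^{a t} for all t ≥ 0 (M ≥ 1, a ∈ ℝ). Let ρ > 0 and let φ : [0,∞) → ℝ be continuous with φ(0) = 1 and 0 < φ(t) ≤ e^{−ρt} for all t ≥ 0. Fix k, i ∈ {2,3} and h, g ∈ H. Then for every ε > 0 there exists β₀ > 0 such that for all 0 < β < β₀, all n ∈ ℕ, and all t_j with (n+1)β ≤ t_j < (n+2)β, one has |(1/β)∫₀^β e^{kρβ} φ((n+i)β + s − t_j) ⟨T(β−s)h, g⟩ ds − ⟨h, g⟩| < ε. -/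
open scoped Classical RealInnerProductSpace
open Real MeasureTheory

/-!
As `β → 0`, the exponential factor tends to `1`, the argument of `φ` stays in `[0, iβ]` and the
argument of `T` in `[0, β]`; so, by continuity of `φ` and of `t ↦ T t h` at `0`, the integrand
tends to `φ 0 ⟪T 0 h, g⟫ = ⟪h, g⟫` uniformly in `s`, `n` and `tⱼ`, and so does its average.
-/

open Set

theorem abs_one_div_mul_integral_sub_le {f : ℝ → ℝ} {β c η : ℝ} (hβ : 0 < β)
    (hf : IntervalIntegrable f volume 0 β) (hfc : ∀ s ∈ Ioc 0 β, |f s - c| ≤ η) :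
    |(1 / β) * (∫ s in (0:ℝ)..β, f s) - c| ≤ η := by
  have hsub : ∫ s in (0:ℝ)..β, (f s - c) = (∫ s in (0:ℝ)..β, f s) - β * c := by
    simp [intervalIntegral.integral_sub hf intervalIntegrable_const]
  have hint : |∫ s in (0:ℝ)..β, (f s - c)| ≤ η * β := by
    have := intervalIntegral.norm_integral_le_of_norm_le_const
      fun s hs => (Real.norm_eq_abs _).trans_le (hfc s (by rwa [uIoc_of_le hβ.le] at hs))
    rwa [sub_zero, abs_of_pos hβ, Real.norm_eq_abs] at this
  calc |(1 / β) * (∫ s in (0:ℝ)..β, f s) - c|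
      = |1 / β| * |∫ s in (0:ℝ)..β, (f s - c)| := by
        rw [← abs_mul, hsub]; congr 1; field_simp
    _ ≤ (1 / β) * (η * β) := by rw [abs_of_pos (one_div_pos.2 hβ)]; gcongr
    _ = η := by field_simp

section
variable {H : Type*} [NormedAddCommGroup H] [InnerProductSpace ℝ H]

theorem exists_pos_abs_exp_mul_mul_inner_sub_lt {φ : ℝ → ℝ} {v : ℝ → H}
    (hφ : ContinuousWithinAt φ (Ici 0) 0) (hφ0 : φ 0 = 1) (hv : ContinuousWithinAt v (Ici 0) 0)
    (κ : ℝ) (g : H) {ε : ℝ} (hε : 0 < ε) :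
    ∃ δ > 0, ∀ x y z : ℝ, |x| < δ → y ∈ Ico 0 δ → z ∈ Ico 0 δ →
      |exp (κ * x) * φ y * ⟪v z, g⟫ - ⟪v 0, g⟫| < ε := by
  let S : Set (ℝ × ℝ × ℝ) := univ ×ˢ Ici 0 ×ˢ Ici 0
  have hφS : ContinuousWithinAt (fun p : ℝ × ℝ × ℝ => φ p.2.1) S 0 :=
    hφ.comp_of_eq continuousWithinAt_snd.fst (fun _ hp => hp.2.1) rfl
  have hvS : ContinuousWithinAt (fun p : ℝ × ℝ × ℝ => v p.2.2) S 0 :=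
    hv.comp_of_eq continuousWithinAt_snd.snd (fun _ hp => hp.2.2) rfl
  have hK : ContinuousWithinAt (fun p : ℝ × ℝ × ℝ => exp (κ * p.1) * φ p.2.1 * ⟪v p.2.2, g⟫)
      S 0 :=
    ((by fun_prop : Continuous fun p : ℝ × ℝ × ℝ => exp (κ * p.1)).continuousWithinAt.mul
      hφS).mul (hvS.inner continuousWithinAt_const)
  obtain ⟨δ, hδ, hKδ⟩ := Metric.continuousWithinAt_iff.1 hK ε hε
  refine ⟨δ, hδ, fun x y z hx hy hz => ?_⟩
  have hdist : dist (x, y, z) 0 < δ := by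
    simp only [Prod.dist_eq, Prod.fst_zero, Prod.snd_zero, Real.dist_eq, sub_zero,
      abs_of_nonneg hy.1, abs_of_nonneg hz.1, max_lt_iff]
    exact ⟨hx, hy.2, hz.2⟩
  simpa [Real.dist_eq, hφ0] using hKδ (x := (x, y, z)) ⟨trivial, hy.1, hz.1⟩ hdist

end

theorem statement3_general
    {H : Type*} [NormedAddCommGroup H] [InnerProductSpace ℝ H]
    (T : ℝ → H →L[ℝ] H)
    (hT0 : T 0 = ContinuousLinearMap.id ℝ H)
    (hTcont : ∀ v : H, ContinuousOn (fun t => T t v) (Set.Ici 0))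
    (ρ : ℝ)
    (φ : ℝ → ℝ) (hφcont : ContinuousOn φ (Set.Ici 0)) (hφ0 : φ 0 = 1)
    (k i : ℕ) (hi : i = 2 ∨ i = 3)
    (h g : H) :
    ∀ ε > 0, ∃ β₀ > 0, ∀ β : ℝ, 0 < β → β < β₀ →
      ∀ (n : ℕ) (tj : ℝ), ((n:ℝ) + 1) * β ≤ tj → tj < ((n:ℝ) + 2) * β →
      |(1 / β) * (∫ s in (0:ℝ)..β,
          Real.exp ((k:ℝ) * ρ * β) * φ (((n:ℝ) + (i:ℝ)) * β + s - tj)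
            * ⟪T (β - s) h, g⟫)
        - ⟪h, g⟫| < ε := by
  intro ε hε
  obtain ⟨δ, hδ, hK⟩ := exists_pos_abs_exp_mul_mul_inner_sub_lt (hφcont 0 self_mem_Ici) hφ0
    (hTcont h 0 self_mem_Ici) (k * ρ) g (half_pos hε)
  have hi2 : (2:ℝ) ≤ i := by rcases hi with rfl | rfl <;> norm_num
  refine ⟨δ / i, by positivity, fun β hβ hβδ n tj htj₁ htj₂ => ?_⟩
  have hiβ : i * β < δ := by rwa [lt_div_iff₀ (by linarith), mul_comm] at hβδ
  have hβi : β ≤ i * β := le_mul_of_one_le_left hβ.le (by linarith)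
  have harg : ∀ s ∈ Icc 0 β, ((n:ℝ) + i) * β + s - tj ∈ Icc 0 (i * β) := fun s hs =>
    ⟨by nlinarith [hs.1], by nlinarith [hs.2]⟩
  have hcont : ContinuousOn (fun s => exp (k * ρ * β) * φ ((n + i) * β + s - tj)
      * ⟪T (β - s) h, g⟫) (uIcc 0 β) := by
    rw [uIcc_of_le hβ.le]
    exact (continuousOn_const.mul (hφcont.comp (by fun_prop) fun s hs => (harg s hs).1)).mul
      (((hTcont h).comp (by fun_prop) fun s (hs : s ∈ Icc 0 β) => sub_nonneg.2 hs.2).inner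
        continuousOn_const)
  have hT0h : T 0 h = h := by rw [hT0]; rfl
  refine (abs_one_div_mul_integral_sub_le hβ hcont.intervalIntegrable fun s hs => ?_).trans_lt
    (half_lt_self hε)
  have hsβ := Ioc_subset_Icc_self hs
  have hclose := hK β _ (β - s) (by rw [abs_of_pos hβ]; linarith)
    ⟨(harg s hsβ).1, (harg s hsβ).2.trans_lt hiβ⟩ ⟨by linarith [hs.2], by linarith [hs.1]⟩
  rw [hT0h] at hclose
  exact hclose.le

theorem statement3
    {H : Type*} [NormedAddCommGroup H] [InnerProductSpace ℝ H] [CompleteSpace H]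
    (T : ℝ → H →L[ℝ] H)
    (hT0 : T 0 = ContinuousLinearMap.id ℝ H)
    (hTadd : ∀ t s : ℝ, 0 ≤ t → 0 ≤ s → T (t + s) = (T t).comp (T s))
    (hTcont : ∀ v : H, ContinuousOn (fun t => T t v) (Set.Ici 0))
    (M a : ℝ) (hM : 1 ≤ M)
    (hTbound : ∀ t : ℝ, 0 ≤ t → ‖T t‖ ≤ M * Real.exp (a * t))
    (ρ : ℝ) (hρ : 0 < ρ)
    (φ : ℝ → ℝ) (hφcont : ContinuousOn φ (Set.Ici 0)) (hφ0 : φ 0 = 1)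
    (hφpos : ∀ t : ℝ, 0 ≤ t → 0 < φ t)
    (hφdec : ∀ t : ℝ, 0 ≤ t → φ t ≤ Real.exp (-ρ * t))
    (k i : ℕ) (hk : k = 2 ∨ k = 3) (hi : i = 2 ∨ i = 3)
    (h g : H) :
    ∀ ε > 0, ∃ β₀ > 0, ∀ β : ℝ, 0 < β → β < β₀ →
      ∀ (n : ℕ) (tj : ℝ), ((n:ℝ) + 1) * β ≤ tj → tj < ((n:ℝ) + 2) * β →
      |(1 / β) * (∫ s in (0:ℝ)..β,
          Real.exp ((k:ℝ) * ρ * β) * φ (((n:ℝ) + (i:ℝ)) * β + s - tj)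
            * ⟪T (β - s) h, g⟫)
        - ⟪h, g⟫| < ε :=
  statement3_general T hT0 hTcont ρ φ hφcont hφ0 k i hi h g
end

section
/- In the exponential-decay model with zero background source (η ≡ 0) and no noise (ν₁ ≡ ν₂ ≡ 0), for every n ∈ ℕ and every g ∈ H the measured difference satisfies the identity F_n = (1/β) [ Σ_{j : nβ ≤ t_j < (n+1)β} ∫_{t_j}^{(n+1)β} e^{ρ(t_j − s)} ⟨T((n+1)β − s)h_j, g⟩ ds + Σ_{j : t_j < nβ} ∫₀^β e^{ρ(t_j − nβ − s)} ⟨T(β − s)h_j, g⟩ ds ]. -/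
open scoped Classical RealInnerProductSpace
open Real MeasureTheory

/-!
With no background source, both `⟪u ((n + 1) β), g⟫` and, by the semigroup law,
`⟪T β (u (n β)), g⟫` equal `⟪T ((n + 1) β) u₀, g⟫` plus integrals of the same kernels
`s ↦ e^{ρ (t_j - s)} ⟪T ((n + 1) β - s) h_j, g⟫`, from `t_j` up to the respective sampling time.
The free evolution of `u₀` cancels in the difference; a burst arriving in `[n β, (n + 1) β)`
keeps its whole integral, and an earlier burst keeps the part over `[n β, (n + 1) β]`,
which is shifted to `[0, β]`.
-/

section StronglyContinuousFamily

variable {H : Type*} [NormedAddCommGroup H] [NormedSpace ℝ H] {T : ℝ → H →L[ℝ] H} {v : H}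

theorem continuousOn_apply_sub (hT : ContinuousOn (fun t => T t v) (Set.Ici 0)) (c : ℝ) :
    ContinuousOn (fun s => T (c - s) v) (Set.Iic c) :=
  hT.comp (continuous_const.sub continuous_id).continuousOn
    fun _ hs => Set.mem_Ici.2 (sub_nonneg.2 hs)

theorem intervalIntegrable_smul_apply_sub (hT : ContinuousOn (fun t => T t v) (Set.Ici 0))
    {f : ℝ → ℝ} (hf : Continuous f) {a b c : ℝ} (ha : a ≤ c) (hb : b ≤ c) :
    IntervalIntegrable (fun s => f s • T (c - s) v) volume a b :=
  ((hf.continuousOn.smul (continuousOn_apply_sub hT c)).mono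
    fun _ hs => hs.2.trans (max_le ha hb)).intervalIntegrable

theorem apply_intervalIntegral_smul_apply_sub [CompleteSpace H]
    (hTadd : ∀ t s : ℝ, 0 ≤ t → 0 ≤ s → T (t + s) = (T t).comp (T s))
    (hT : ContinuousOn (fun t => T t v) (Set.Ici 0)) {f : ℝ → ℝ} (hf : Continuous f)
    {τ a b c : ℝ} (hτ : 0 ≤ τ) (ha : a ≤ c) (hb : b ≤ c) :
    T τ (∫ s in a..b, f s • T (c - s) v) = ∫ s in a..b, f s • T (τ + c - s) v := by
  rw [← (T τ).intervalIntegral_comp_comm (intervalIntegrable_smul_apply_sub hT hf ha hb)]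
  refine intervalIntegral.integral_congr fun s hs => ?_
  have hsc : 0 ≤ c - s := sub_nonneg.2 (hs.2.trans (max_le ha hb))
  simp only [map_smul, add_sub_assoc, hTadd τ (c - s) hτ hsc, ContinuousLinearMap.comp_apply]

theorem apply_add_sum_intervalIntegral_exp_smul [CompleteSpace H]
    (hTadd : ∀ t s : ℝ, 0 ≤ t → 0 ≤ s → T (t + s) = (T t).comp (T s))
    (hT : ∀ v : H, ContinuousOn (fun t => T t v) (Set.Ici 0)) {ι : Type*} (S : Finset ι)
    (t₀ : ι → ℝ) (h : ι → H) (ρ : ℝ) {τ t : ℝ} (hτ : 0 ≤ τ) (ht : 0 ≤ t)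
    (hS : ∀ j ∈ S, t₀ j ≤ t) (w : H) :
    T τ (T t w + ∑ j ∈ S, ∫ s in (t₀ j)..t, exp (-ρ * (s - t₀ j)) • T (t - s) (h j))
      = T (τ + t) w
        + ∑ j ∈ S, ∫ s in (t₀ j)..t, exp (-ρ * (s - t₀ j)) • T (τ + t - s) (h j) := by
  rw [map_add, map_sum, hTadd τ t hτ ht, ContinuousLinearMap.comp_apply]
  congr 1
  exact Finset.sum_congr rfl fun j hj =>
    apply_intervalIntegral_smul_apply_sub hTadd (hT _) (by fun_prop) hτ (hS j hj) le_rfl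

end StronglyContinuousFamily

section InnerProduct

variable {H : Type*} [NormedAddCommGroup H] [InnerProductSpace ℝ H] {T : ℝ → H →L[ℝ] H}

theorem inner_intervalIntegral_smul_apply_sub [CompleteSpace H] {v : H}
    (hT : ContinuousOn (fun t => T t v) (Set.Ici 0)) {f : ℝ → ℝ} (hf : Continuous f)
    {a b c : ℝ} (ha : a ≤ c) (hb : b ≤ c) (g : H) :
    ⟪∫ s in a..b, f s • T (c - s) v, g⟫ = ∫ s in a..b, f s * ⟪T (c - s) v, g⟫ := by
  rw [real_inner_comm, ← innerSL_apply_apply ℝ,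
    ← (innerSL ℝ g).intervalIntegral_comp_comm (intervalIntegrable_smul_apply_sub hT hf ha hb)]
  simp only [innerSL_apply_apply, real_inner_smul_right, real_inner_comm]

theorem intervalIntegrable_mul_inner_apply_sub {v : H}
    (hT : ContinuousOn (fun t => T t v) (Set.Ici 0)) {f : ℝ → ℝ} (hf : Continuous f)
    {a b c : ℝ} (ha : a ≤ c) (hb : b ≤ c) (g : H) :
    IntervalIntegrable (fun s => f s * ⟪T (c - s) v, g⟫) volume a b :=
  ((hf.continuousOn.mul ((continuousOn_apply_sub hT c).inner continuousOn_const)).mono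
    fun _ hs => hs.2.trans (max_le ha hb)).intervalIntegrable

theorem inner_add_sum_intervalIntegral_exp_smul [CompleteSpace H]
    (hT : ∀ v : H, ContinuousOn (fun t => T t v) (Set.Ici 0)) {ι : Type*} (S : Finset ι)
    (t₀ : ι → ℝ) (h : ι → H) (ρ : ℝ) {t c : ℝ} (hS : ∀ j ∈ S, t₀ j ≤ t) (htc : t ≤ c)
    (w g : H) :
    ⟪w + ∑ j ∈ S, ∫ s in (t₀ j)..t, exp (-ρ * (s - t₀ j)) • T (c - s) (h j), g⟫
      = ⟪w, g⟫ + ∑ j ∈ S, ∫ s in (t₀ j)..t, exp (ρ * (t₀ j - s)) * ⟪T (c - s) (h j), g⟫ := by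
  rw [inner_add_left, sum_inner]
  congr 1
  refine Finset.sum_congr rfl fun j hj => ?_
  rw [inner_intervalIntegral_smul_apply_sub (hT _) (by fun_prop) ((hS j hj).trans htc) htc]
  simp only [neg_mul_comm, neg_sub]

end InnerProduct

theorem sum_filter_intervalIntegral_sub {ι : Type*} [Fintype ι] (t : ι → ℝ)
    (φ : ι → ℝ → ℝ) {A B : ℝ} (hAB : A ≤ B)
    (hφ : ∀ j, t j < A → IntervalIntegrable (φ j) volume (t j) B) :
    (∑ j ∈ Finset.univ.filter (fun j => t j < B), ∫ s in (t j)..B, φ j s)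
      - ∑ j ∈ Finset.univ.filter (fun j => t j < A), ∫ s in (t j)..A, φ j s
      = (∑ j ∈ Finset.univ.filter (fun j => A ≤ t j ∧ t j < B), ∫ s in (t j)..B, φ j s)
        + ∑ j ∈ Finset.univ.filter (fun j => t j < A), ∫ s in A..B, φ j s := by
  have hsplit : Finset.univ.filter (fun j => t j < B) = Finset.univ.filter (fun j => t j < A)
      ∪ Finset.univ.filter (fun j => A ≤ t j ∧ t j < B) := by
    ext j
    simp only [Finset.mem_union, Finset.mem_filter, Finset.mem_univ, true_and]
    constructor
    · intro hB
      by_cases hA : t j < A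
      exacts [.inl hA, .inr ⟨not_lt.1 hA, hB⟩]
    · rintro (hA | hAB')
      exacts [hA.trans_le hAB, hAB'.2]
  have hdisj : Disjoint (Finset.univ.filter (fun j => t j < A))
      (Finset.univ.filter (fun j => A ≤ t j ∧ t j < B)) :=
    Finset.disjoint_filter.2 fun _ _ hA hAB' => (not_lt.2 hAB'.1) hA
  have hadjacent : ∀ j ∈ Finset.univ.filter (fun j => t j < A),
      ∫ s in (t j)..B, φ j s = (∫ s in (t j)..A, φ j s) + ∫ s in A..B, φ j s := by
    intro j hj
    have hA := (Finset.mem_filter.1 hj).2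
    have hmem : A ∈ Set.uIcc (t j) B := Set.mem_uIcc_of_le hA.le hAB
    exact (intervalIntegral.integral_add_adjacent_intervals
      ((hφ j hA).mono_set (Set.uIcc_subset_uIcc Set.left_mem_uIcc hmem))
      ((hφ j hA).mono_set (Set.uIcc_subset_uIcc hmem Set.right_mem_uIcc))).symm
  rw [hsplit, Finset.sum_union hdisj, Finset.sum_congr rfl hadjacent, Finset.sum_add_distrib]
  ring

theorem statement4_general
    {H : Type*} [NormedAddCommGroup H] [InnerProductSpace ℝ H] [CompleteSpace H]
    (T : ℝ → H →L[ℝ] H)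
    (hTadd : ∀ t s : ℝ, 0 ≤ t → 0 ≤ s → T (t + s) = (T t).comp (T s))
    (hTcont : ∀ v : H, ContinuousOn (fun t => T t v) (Set.Ici 0))
    (ρ β : ℝ) (hβ : 0 < β)
    (N : ℕ) (tb : Fin N → ℝ) (hb : Fin N → H)
    (u₀ : H) (η : ℝ → H) (u : ℝ → H)
    (hu : ∀ t' : ℝ, 0 ≤ t' → u t' = T t' u₀
      + (∑ j ∈ Finset.univ.filter (fun j => tb j < t'),
          ∫ s in (tb j)..t', Real.exp (-ρ * (s - tb j)) • T (t' - s) (hb j))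
      + ∫ s in (0:ℝ)..t', T (t' - s) (η s))
    (g : H)
    (ν₁ ν₂ : ℕ → ℝ)
    (F : ℕ → ℝ)
    (hF : ∀ n : ℕ, F n =
      (⟪u (((n:ℝ) + 1) * β), g⟫ - ⟪T β (u ((n:ℝ) * β)), g⟫) / β
      + ν₁ (n + 1) - ν₂ n)
    (hη0 : ∀ t : ℝ, η t = 0) (hν₁0 : ∀ n, ν₁ n = 0) (hν₂0 : ∀ n, ν₂ n = 0)
    (n : ℕ) :
    F n = (1 / β) * (
      (∑ j ∈ Finset.univ.filter
          (fun j => (n:ℝ) * β ≤ tb j ∧ tb j < ((n:ℝ) + 1) * β),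
        ∫ s in (tb j)..(((n:ℝ) + 1) * β),
          Real.exp (ρ * (tb j - s)) * ⟪T (((n:ℝ) + 1) * β - s) (hb j), g⟫)
      + ∑ j ∈ Finset.univ.filter (fun j => tb j < (n:ℝ) * β),
        ∫ s in (0:ℝ)..β,
          Real.exp (ρ * (tb j - (n:ℝ) * β - s)) * ⟪T (β - s) (hb j), g⟫) := by
  set A : ℝ := (n:ℝ) * β
  have hA : 0 ≤ A := by positivity
  have hu_sourceFree : ∀ t, 0 ≤ t → u t = T t u₀ + ∑ j ∈ Finset.univ.filter (fun j => tb j < t),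
      ∫ s in (tb j)..t, exp (-ρ * (s - tb j)) • T (t - s) (hb j) := fun t ht => by
    simp only [hu t ht, hη0, map_zero, intervalIntegral.integral_zero, add_zero]
  have hbefore : ∀ t, ∀ j ∈ Finset.univ.filter (fun j => tb j < t), tb j ≤ t :=
    fun _ _ hj => (Finset.mem_filter.1 hj).2.le
  rw [hF, hν₁0, hν₂0, add_zero, sub_zero, show ((n:ℝ) + 1) * β = β + A by ring,
    hu_sourceFree _ (by positivity), hu_sourceFree A hA,
    apply_add_sum_intervalIntegral_exp_smul hTadd hTcont _ _ _ _ hβ.le hA (hbefore A),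
    inner_add_sum_intervalIntegral_exp_smul hTcont _ _ _ _ (hbefore _) le_rfl,
    inner_add_sum_intervalIntegral_exp_smul hTcont _ _ _ _ (hbefore A) (by linarith),
    add_sub_add_left_eq_sub, sum_filter_intervalIntegral_sub _ _ (by linarith)
      fun j hj => intervalIntegrable_mul_inner_apply_sub (hTcont _) (by fun_prop)
        (by linarith) le_rfl g,
    div_eq_inv_mul, one_div]
  congr 2
  refine Finset.sum_congr rfl fun j _ => ?_
  simpa only [zero_add, sub_add_eq_sub_sub_swap, add_sub_cancel_right] using
    (intervalIntegral.integral_comp_add_right (a := 0) (b := β)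
      (fun s => exp (ρ * (tb j - s)) * ⟪T (β + A - s) (hb j), g⟫) A).symm

theorem statement4
    {H : Type*} [NormedAddCommGroup H] [InnerProductSpace ℝ H] [CompleteSpace H]
    (T : ℝ → H →L[ℝ] H)
    (hT0 : T 0 = ContinuousLinearMap.id ℝ H)
    (hTadd : ∀ t s : ℝ, 0 ≤ t → 0 ≤ s → T (t + s) = (T t).comp (T s))
    (hTcont : ∀ v : H, ContinuousOn (fun t => T t v) (Set.Ici 0))
    (ρ β : ℝ) (hρ : 0 < ρ) (hβ : 0 < β)
    (N : ℕ) (tb : Fin N → ℝ) (hb : Fin N → H)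
    (htpos : ∀ j, 0 < tb j) (htmono : StrictMono tb)
    (htgap : ∀ (i : ℕ) (h1 : i + 1 < N),
      tb ⟨i + 1, h1⟩ - tb ⟨i, Nat.lt_of_succ_lt h1⟩ ≥ 4 * β)
    (u₀ : H) (η : ℝ → H) (u : ℝ → H)
    (hu : ∀ t' : ℝ, 0 ≤ t' → u t' = T t' u₀
      + (∑ j ∈ Finset.univ.filter (fun j => tb j < t'),
          ∫ s in (tb j)..t', Real.exp (-ρ * (s - tb j)) • T (t' - s) (hb j))
      + ∫ s in (0:ℝ)..t', T (t' - s) (η s))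
    (g : H) (σ : ℝ) (hσ : 0 ≤ σ)
    (ν₁ ν₂ : ℕ → ℝ) (hν₁ : ∀ n, |ν₁ n| ≤ σ) (hν₂ : ∀ n, |ν₂ n| ≤ σ)
    (F : ℕ → ℝ)
    (hF : ∀ n : ℕ, F n =
      (⟪u (((n:ℝ) + 1) * β), g⟫ - ⟪T β (u ((n:ℝ) * β)), g⟫) / β
      + ν₁ (n + 1) - ν₂ n)
    (hη0 : ∀ t : ℝ, η t = 0) (hν₁0 : ∀ n, ν₁ n = 0) (hν₂0 : ∀ n, ν₂ n = 0)
    (n : ℕ) :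
    F n = (1 / β) * (
      (∑ j ∈ Finset.univ.filter
          (fun j => (n:ℝ) * β ≤ tb j ∧ tb j < ((n:ℝ) + 1) * β),
        ∫ s in (tb j)..(((n:ℝ) + 1) * β),
          Real.exp (ρ * (tb j - s)) * ⟪T (((n:ℝ) + 1) * β - s) (hb j), g⟫)
      + ∑ j ∈ Finset.univ.filter (fun j => tb j < (n:ℝ) * β),
        ∫ s in (0:ℝ)..β,
          Real.exp (ρ * (tb j - (n:ℝ) * β - s)) * ⟪T (β - s) (hb j), g⟫) :=
  statement4_general T hTadd hTcont ρ β hβ N tb hb u₀ η u hu g ν₁ ν₂ F hF hη0 hν₁0 hν₂0 n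
end

section
/- In the exponential-decay model with zero background source (η ≡ 0) and no noise (ν₁ ≡ ν₂ ≡ 0): if n ∈ ℕ is such that no burst time t_j lies in the interval [nβ, (n+2)β), then for every g ∈ H, e^{ρβ} F_{n+1} − F_n = 0. -/
/-!
With no background source, the increment `u(a + β) - T(β) u(a)` only sees the burst integrals
over `[a, a + β]`: the semigroup law carries everything accumulated before `a` forward exactly.
If no burst starts in `[nβ, (n + 2)β)`, the increment over `[(n + 1)β, (n + 2)β]` is the one
over `[nβ, (n + 1)β]` shifted by `β`, and each decaying profile `e^{-ρ(s - t_j)}` has lost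
exactly the factor `e^{-ρβ}` along the shift.
-/

open scoped Classical RealInnerProductSpace
open Real MeasureTheory

theorem Finset.filter_lt_eq_of_forall_notMem_Ico {ι : Type*} (s : Finset ι) {c : ι → ℝ}
    {a b t : ℝ} (hc : ∀ j ∈ s, c j ∉ Set.Ico a b) (hat : a ≤ t) (htb : t ≤ b) :
    s.filter (fun j => c j < t) = s.filter (fun j => c j < a) := by
  refine Finset.filter_congr fun j hj => ⟨fun hjt => ?_, fun hja => hja.trans_le hat⟩
  by_contra! hja
  exact hc j hj ⟨hja, hjt.trans_le htb⟩

section BurstSolution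

variable {E ι : Type*} [NormedAddCommGroup E] [NormedSpace ℝ E] [CompleteSpace E]
  {T : ℝ → E →L[ℝ] E}

noncomputable def burstSolution (T : ℝ → E →L[ℝ] E) (ρ : ℝ) (u₀ : E) (S : Finset ι)
    (c : ι → ℝ) (h : ι → E) (t : ℝ) : E :=
  T t u₀ + ∑ j ∈ S, ∫ s in (c j)..t, exp (-ρ * (s - c j)) • T (t - s) (h j)

omit [CompleteSpace E] in
theorem intervalIntegrable_smul_semigroup
    (hTcont : ∀ v : E, ContinuousOn (fun t => T t v) (Set.Ici 0))
    {f : ℝ → ℝ} (hf : Continuous f) (v : E) {a b t : ℝ} (hab : a ≤ b) (hbt : b ≤ t) :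
    IntervalIntegrable (fun s => f s • T (t - s) v) volume a b := by
  refine (hf.continuousOn.smul ((hTcont v).comp (by fun_prop) ?_)).intervalIntegrable
  intro s hs
  rw [Set.uIcc_of_le hab] at hs
  exact Set.mem_Ici.mpr (by linarith [hs.2])

theorem semigroup_apply_intervalIntegral_smul
    (hTadd : ∀ t s : ℝ, 0 ≤ t → 0 ≤ s → T (t + s) = (T t).comp (T s))
    (hTcont : ∀ v : E, ContinuousOn (fun t => T t v) (Set.Ici 0))
    {β : ℝ} (hβ : 0 ≤ β) {f : ℝ → ℝ} (hf : Continuous f) (v : E) {a b t : ℝ}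
    (hab : a ≤ b) (hbt : b ≤ t) :
    T β (∫ s in a..b, f s • T (t - s) v) = ∫ s in a..b, f s • T (t + β - s) v := by
  rw [← (T β).intervalIntegral_comp_comm (intervalIntegrable_smul_semigroup hTcont hf v hab hbt)]
  refine intervalIntegral.integral_congr fun s hs => ?_
  rw [Set.uIcc_of_le hab] at hs
  simp only [map_smul, show t + β - s = β + (t - s) by ring,
    hTadd β (t - s) hβ (by linarith [hs.2]), ContinuousLinearMap.comp_apply]

theorem burstSolution_add_sub_semigroup
    (hTadd : ∀ t s : ℝ, 0 ≤ t → 0 ≤ s → T (t + s) = (T t).comp (T s))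
    (hTcont : ∀ v : E, ContinuousOn (fun t => T t v) (Set.Ici 0))
    (ρ : ℝ) (u₀ : E) {S : Finset ι} {c : ι → ℝ} (h : ι → E) {a β : ℝ} (ha : 0 ≤ a)
    (hβ : 0 ≤ β) (hc : ∀ j ∈ S, c j ≤ a) :
    burstSolution T ρ u₀ S c h (a + β) - T β (burstSolution T ρ u₀ S c h a)
      = ∑ j ∈ S, ∫ s in a..a + β, exp (-ρ * (s - c j)) • T (a + β - s) (h j) := by
  have hexp : ∀ j, Continuous fun s => exp (-ρ * (s - c j)) := fun j => by fun_prop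
  have hab : a ≤ a + β := by linarith
  have hsplit : ∀ j ∈ S,
      (∫ s in (c j)..a + β, exp (-ρ * (s - c j)) • T (a + β - s) (h j))
        - T β (∫ s in (c j)..a, exp (-ρ * (s - c j)) • T (a - s) (h j))
      = ∫ s in a..a + β, exp (-ρ * (s - c j)) • T (a + β - s) (h j) := fun j hj => by
    rw [semigroup_apply_intervalIntegral_smul hTadd hTcont hβ (hexp j) _ (hc j hj) le_rfl,
      sub_eq_iff_eq_add', intervalIntegral.integral_add_adjacent_intervals
        (intervalIntegrable_smul_semigroup hTcont (hexp j) _ (hc j hj) hab)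
        (intervalIntegrable_smul_semigroup hTcont (hexp j) _ hab le_rfl)]
  have hfreeEvolution : T β (T a u₀) = T (a + β) u₀ := by
    rw [add_comm, hTadd β a hβ ha, ContinuousLinearMap.comp_apply]
  simp only [burstSolution, map_add, map_sum, hfreeEvolution, ← Finset.sum_congr rfl hsplit,
    Finset.sum_sub_distrib]
  abel

omit [CompleteSpace E] in
theorem intervalIntegral_exp_smul_comp_add_right (ρ c a β : ℝ) (φ : ℝ → E) :
    ∫ s in a + β..a + β + β, exp (-ρ * (s - c)) • φ (a + β + β - s)
      = exp (-(ρ * β)) • ∫ s in a..a + β, exp (-ρ * (s - c)) • φ (a + β - s) := by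
  rw [← intervalIntegral.integral_comp_add_right _ β, ← intervalIntegral.integral_smul]
  refine intervalIntegral.integral_congr fun s _ => ?_
  simp only [smul_smul, ← exp_add, show a + β + β - (s + β) = a + β - s by ring]
  ring_nf

theorem burstSolution_increment_succ
    (hTadd : ∀ t s : ℝ, 0 ≤ t → 0 ≤ s → T (t + s) = (T t).comp (T s))
    (hTcont : ∀ v : E, ContinuousOn (fun t => T t v) (Set.Ici 0))
    (ρ : ℝ) (u₀ : E) {S : Finset ι} {c : ι → ℝ} (h : ι → E) {a β : ℝ} (ha : 0 ≤ a)
    (hβ : 0 ≤ β) (hc : ∀ j ∈ S, c j ≤ a) :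
    burstSolution T ρ u₀ S c h (a + β + β) - T β (burstSolution T ρ u₀ S c h (a + β))
      = exp (-(ρ * β)) •
          (burstSolution T ρ u₀ S c h (a + β) - T β (burstSolution T ρ u₀ S c h a)) := by
  have hc' : ∀ j ∈ S, c j ≤ a + β := fun j hj => by linarith [hc j hj]
  rw [burstSolution_add_sub_semigroup hTadd hTcont ρ u₀ h (by linarith) hβ hc',
    burstSolution_add_sub_semigroup hTadd hTcont ρ u₀ h ha hβ hc, Finset.smul_sum]
  exact Finset.sum_congr rfl fun j _ =>
    intervalIntegral_exp_smul_comp_add_right ρ (c j) a β (T · (h j))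

end BurstSolution

theorem statement5_general
    {H : Type*} [NormedAddCommGroup H] [InnerProductSpace ℝ H] [CompleteSpace H]
    (T : ℝ → H →L[ℝ] H)
    (hTadd : ∀ t s : ℝ, 0 ≤ t → 0 ≤ s → T (t + s) = (T t).comp (T s))
    (hTcont : ∀ v : H, ContinuousOn (fun t => T t v) (Set.Ici 0))
    (ρ β : ℝ) (hβ : 0 < β)
    (N : ℕ) (tb : Fin N → ℝ) (hb : Fin N → H)
    (u₀ : H) (η : ℝ → H) (u : ℝ → H)
    (hu : ∀ t' : ℝ, 0 ≤ t' → u t' = T t' u₀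
      + (∑ j ∈ Finset.univ.filter (fun j => tb j < t'),
          ∫ s in (tb j)..t', Real.exp (-ρ * (s - tb j)) • T (t' - s) (hb j))
      + ∫ s in (0:ℝ)..t', T (t' - s) (η s))
    (g : H)
    (ν₁ ν₂ : ℕ → ℝ)
    (F : ℕ → ℝ)
    (hF : ∀ n : ℕ, F n =
      (⟪u (((n:ℝ) + 1) * β), g⟫ - ⟪T β (u ((n:ℝ) * β)), g⟫) / β
      + ν₁ (n + 1) - ν₂ n)
    (hη0 : ∀ t : ℝ, η t = 0) (hν₁0 : ∀ n, ν₁ n = 0) (hν₂0 : ∀ n, ν₂ n = 0)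
    (n : ℕ)
    (hnb : ∀ j : Fin N, ¬((n:ℝ) * β ≤ tb j ∧ tb j < ((n:ℝ) + 2) * β)) :
    Real.exp (ρ * β) * F (n + 1) - F n = 0 := by
  set a := (n : ℝ) * β
  set S := Finset.univ.filter fun j => tb j < a with hSdef
  have ha : 0 ≤ a := by positivity
  have hS : ∀ j ∈ S, tb j ≤ a := fun j hj => (Finset.mem_filter.mp hj).2.le
  have hsol : ∀ t, a ≤ t → t ≤ a + β + β → u t = burstSolution T ρ u₀ S tb hb t := by
    intro t hat htc
    rw [hu t (ha.trans hat), Finset.filter_lt_eq_of_forall_notMem_Ico _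
      (fun j _ => hnb j) hat (by linarith), ← hSdef]
    simp only [burstSolution, hη0, map_zero, intervalIntegral.integral_zero, add_zero]
  have hFu : ∀ k : ℕ, F k = ⟪u (((k : ℝ) + 1) * β) - T β (u ((k : ℝ) * β)), g⟫ / β := by
    intro k
    rw [hF k, hν₁0, hν₂0, inner_sub_left]
    ring
  rw [hFu, hFu, show (((n + 1 : ℕ) : ℝ) + 1) * β = a + β + β by push_cast; ring,
    show ((n + 1 : ℕ) : ℝ) * β = a + β by push_cast; ring,
    show ((n : ℝ) + 1) * β = a + β by ring]
  rw [hsol a le_rfl (by linarith), hsol (a + β) (by linarith) (by linarith),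
    hsol (a + β + β) (by linarith) le_rfl,
    burstSolution_increment_succ hTadd hTcont ρ u₀ hb ha hβ.le hS, real_inner_smul_left]
  rw [mul_div_assoc, ← mul_assoc, ← exp_add, add_neg_cancel, exp_zero, one_mul, sub_self]

theorem statement5
    {H : Type*} [NormedAddCommGroup H] [InnerProductSpace ℝ H] [CompleteSpace H]
    (T : ℝ → H →L[ℝ] H)
    (hT0 : T 0 = ContinuousLinearMap.id ℝ H)
    (hTadd : ∀ t s : ℝ, 0 ≤ t → 0 ≤ s → T (t + s) = (T t).comp (T s))
    (hTcont : ∀ v : H, ContinuousOn (fun t => T t v) (Set.Ici 0))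
    (ρ β : ℝ) (hρ : 0 < ρ) (hβ : 0 < β)
    (N : ℕ) (tb : Fin N → ℝ) (hb : Fin N → H)
    (htpos : ∀ j, 0 < tb j) (htmono : StrictMono tb)
    (htgap : ∀ (i : ℕ) (h1 : i + 1 < N),
      tb ⟨i + 1, h1⟩ - tb ⟨i, Nat.lt_of_succ_lt h1⟩ ≥ 4 * β)
    (u₀ : H) (η : ℝ → H) (u : ℝ → H)
    (hu : ∀ t' : ℝ, 0 ≤ t' → u t' = T t' u₀
      + (∑ j ∈ Finset.univ.filter (fun j => tb j < t'),
          ∫ s in (tb j)..t', Real.exp (-ρ * (s - tb j)) • T (t' - s) (hb j))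
      + ∫ s in (0:ℝ)..t', T (t' - s) (η s))
    (g : H) (σ : ℝ) (hσ : 0 ≤ σ)
    (ν₁ ν₂ : ℕ → ℝ) (hν₁ : ∀ n, |ν₁ n| ≤ σ) (hν₂ : ∀ n, |ν₂ n| ≤ σ)
    (F : ℕ → ℝ)
    (hF : ∀ n : ℕ, F n =
      (⟪u (((n:ℝ) + 1) * β), g⟫ - ⟪T β (u ((n:ℝ) * β)), g⟫) / β
      + ν₁ (n + 1) - ν₂ n)
    (hη0 : ∀ t : ℝ, η t = 0) (hν₁0 : ∀ n, ν₁ n = 0) (hν₂0 : ∀ n, ν₂ n = 0)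
    (n : ℕ)
    (hnb : ∀ j : Fin N, ¬((n:ℝ) * β ≤ tb j ∧ tb j < ((n:ℝ) + 2) * β)) :
    Real.exp (ρ * β) * F (n + 1) - F n = 0 :=
  statement5_general T hTadd hTcont ρ β hβ N tb hb u₀ η u hu g ν₁ ν₂ F hF hη0 hν₁0 hν₂0 n hnb
end

section
/- In the exponential-decay model with zero background source (η ≡ 0) and no noise (ν₁ ≡ ν₂ ≡ 0): if n ≥ 1 and the j-th burst time satisfies (n+1)β ≤ t_j < (n+2)β, then for every g ∈ H, e^{3ρβ} F_{n+2} − F_{n−1} = (1/β) ∫₀^β e^{ρ(t_j − (n−1)β − s)} ⟨T(β − s)h_j, g⟩ ds. -/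
/-!
Between two consecutive samples, the semigroup law makes `u((m+1)β) - T(β) u(mβ)` equal to the
input received during that window only. If no burst fires inside the window, this is a sum over
the bursts already fired of one fixed profile `∫₀^β e^{-ρs} T(β-s) h_i ds`, damped by
`e^{-ρ(mβ - t_i)}`. The windows starting at `(n-1)β` and `(n+2)β` are quiet, and exactly the burst
`j` fires between them, so after rescaling by `e^{3ρβ}` all the older bursts cancel and only the
term of burst `j` remains.
-/

open scoped Classical RealInnerProductSpace
open Real MeasureTheory

section BurstResponse

variable {H : Type*} [NormedAddCommGroup H] [InnerProductSpace ℝ H]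

/-- The summand of the mild solution contributed by a burst of shape `h` fired at time `c`. -/
noncomputable def burstResponse (T : ℝ → H →L[ℝ] H) (ρ c : ℝ) (h : H) (t : ℝ) : H :=
  ∫ s in c..t, exp (-ρ * (s - c)) • T (t - s) h

variable {T : ℝ → H →L[ℝ] H}

lemma intervalIntegrable_decay_smul_semigroup
    (hTcont : ∀ v : H, ContinuousOn (fun t => T t v) (Set.Ici 0))
    (ρ c d : ℝ) (h : H) {a b : ℝ} (had : a ≤ d) (hbd : b ≤ d) :
    IntervalIntegrable (fun s => exp (-ρ * (s - c)) • T (d - s) h) volume a b := by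
  refine ContinuousOn.intervalIntegrable (ContinuousOn.smul (by fun_prop) ?_)
  refine (hTcont h).comp (by fun_prop) fun s hs => Set.mem_Ici.2 (sub_nonneg.2 ?_)
  rcases Set.mem_uIcc.1 hs with ⟨_, hs⟩ | ⟨_, hs⟩
  exacts [hs.trans hbd, hs.trans had]

/-- By the semigroup law `T β ∘ T (t - s) = T (t + β - s)`, only the input received during
`[t, t + β]` survives; shifted to `[0, β]` it is a fresh burst, damped by `e^{-ρ (t - c)}`. -/
lemma burstResponse_add_sub [CompleteSpace H]
    (hTadd : ∀ t s : ℝ, 0 ≤ t → 0 ≤ s → T (t + s) = (T t).comp (T s))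
    (hTcont : ∀ v : H, ContinuousOn (fun t => T t v) (Set.Ici 0))
    {ρ β c t : ℝ} (hβ : 0 ≤ β) (hct : c ≤ t) (h : H) :
    burstResponse T ρ c h (t + β) - T β (burstResponse T ρ c h t)
      = exp (ρ * (c - t)) • burstResponse T ρ 0 h β := by
  have hpast : T β (burstResponse T ρ c h t)
      = ∫ s in c..t, exp (-ρ * (s - c)) • T (t + β - s) h := by
    rw [burstResponse, ← ContinuousLinearMap.intervalIntegral_comp_comm _
      (intervalIntegrable_decay_smul_semigroup hTcont ρ c t h hct le_rfl)]
    refine intervalIntegral.integral_congr fun s hs => ?_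
    have hst : 0 ≤ t - s := sub_nonneg.2 (Set.uIcc_of_le hct ▸ hs).2
    rw [(T β).map_smul, show t + β - s = β + (t - s) by ring, hTadd β (t - s) hβ hst]
    rfl
  have hsplit := intervalIntegral.integral_add_adjacent_intervals
    (intervalIntegrable_decay_smul_semigroup hTcont ρ c (t + β) h (a := c) (b := t)
      (by linarith) (by linarith))
    (intervalIntegrable_decay_smul_semigroup hTcont ρ c (t + β) h (a := t) (b := t + β)
      (by linarith) le_rfl)
  have hshift := intervalIntegral.integral_comp_add_left
    (fun s => exp (-ρ * (s - c)) • T (t + β - s) h) t (a := 0) (b := β)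
  rw [add_zero] at hshift
  rw [hpast, burstResponse, ← hsplit, add_sub_cancel_left, ← hshift, burstResponse,
    ← intervalIntegral.integral_smul]
  refine intervalIntegral.integral_congr fun s _ => ?_
  simp only [smul_smul, ← exp_add]
  congr 2 <;> ring_nf

lemma exp_mul_inner_burstResponse [CompleteSpace H]
    (hTcont : ∀ v : H, ContinuousOn (fun t => T t v) (Set.Ici 0))
    (ρ β a : ℝ) (hβ : 0 ≤ β) (h g : H) :
    exp (ρ * a) * ⟪burstResponse T ρ 0 h β, g⟫
      = ∫ s in (0:ℝ)..β, exp (ρ * (a - s)) * ⟪T (β - s) h, g⟫ := by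
  have hcomm := (innerSL ℝ g).intervalIntegral_comp_comm
    (intervalIntegrable_decay_smul_semigroup hTcont ρ 0 β h hβ le_rfl)
  simp only [innerSL_apply_apply, real_inner_smul_right] at hcomm
  rw [burstResponse, real_inner_comm, ← hcomm, ← intervalIntegral.integral_const_mul]
  refine intervalIntegral.integral_congr fun s _ => ?_
  rw [real_inner_comm, ← mul_assoc, ← exp_add]
  ring_nf

lemma inner_add_sub_semigroup_eq_sum [CompleteSpace H]
    (hTadd : ∀ t s : ℝ, 0 ≤ t → 0 ≤ s → T (t + s) = (T t).comp (T s))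
    (hTcont : ∀ v : H, ContinuousOn (fun t => T t v) (Set.Ici 0))
    {ρ β : ℝ} (hβ : 0 ≤ β) {N : ℕ} (tb : Fin N → ℝ) (hb : Fin N → H) (u₀ : H) (u : ℝ → H)
    (hu : ∀ t' : ℝ, 0 ≤ t' → u t' = T t' u₀
      + ∑ j ∈ Finset.univ.filter (fun j => tb j < t'), burstResponse T ρ (tb j) (hb j) t')
    (g : H) {t : ℝ} (ht : 0 ≤ t) (hquiet : ∀ i, tb i ∉ Set.Ico t (t + β)) :
    ⟪u (t + β) - T β (u t), g⟫ = ∑ i ∈ Finset.univ.filter (fun i => tb i < t),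
      exp (ρ * (tb i - t)) * ⟪burstResponse T ρ 0 (hb i) β, g⟫ := by
  have hfired : Finset.univ.filter (fun i => tb i < t + β)
      = Finset.univ.filter (fun i => tb i < t) :=
    Finset.filter_congr fun i _ => ⟨fun hi => not_le.1 fun hti => hquiet i ⟨hti, hi⟩,
      fun hi => by linarith⟩
  have hinitial : T (t + β) u₀ = T β (T t u₀) := by
    rw [add_comm, hTadd β t hβ ht]
    rfl
  rw [hu (t + β) (by linarith), hu t ht, hfired, hinitial, map_add, map_sum,
    add_sub_add_left_eq_sub, ← Finset.sum_sub_distrib, sum_inner]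
  refine Finset.sum_congr rfl fun i hi => ?_
  rw [burstResponse_add_sub hTadd hTcont hβ (Finset.mem_filter.1 hi).2.le, real_inner_smul_left]

end BurstResponse

lemma StrictMono.add_le_of_lt_of_gap {N : ℕ} {tb : Fin N → ℝ} (htmono : StrictMono tb) {δ : ℝ}
    (htgap : ∀ (i : ℕ) (h1 : i + 1 < N),
      tb ⟨i + 1, h1⟩ - tb ⟨i, Nat.lt_of_succ_lt h1⟩ ≥ δ)
    {i j : Fin N} (hij : i < j) : tb i + δ ≤ tb j := by
  have hsucc : (i : ℕ) + 1 < N := by omega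
  have hgap := htgap i hsucc
  have hle : tb ⟨i + 1, hsucc⟩ ≤ tb j := htmono.monotone (Fin.le_def.2 hij)
  linarith

section Isolated

variable {ι : Type*} {tb : ι → ℝ} {j : ι} {a b : ℝ}

lemma notMem_Ico_of_isolated (hisol : ∀ i ≠ j, tb i < a ∨ b ≤ tb i) {a' b' : ℝ}
    (ha : a ≤ a') (hb : b' ≤ b) (hj : tb j ∉ Set.Ico a' b') (i : ι) : tb i ∉ Set.Ico a' b' := by
  rcases eq_or_ne i j with rfl | hi
  · exact hj
  · rintro ⟨h₁, h₂⟩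
    rcases hisol i hi with h | h <;> linarith

lemma filter_lt_eq_insert_of_isolated [Fintype ι] [DecidableEq ι]
    (hisol : ∀ i ≠ j, tb i < a ∨ b ≤ tb i) {b' : ℝ} (hb : b' ≤ b) (hja : a ≤ tb j)
    (hjb : tb j < b') :
    Finset.univ.filter (fun i => tb i < b')
      = insert j (Finset.univ.filter (fun i => tb i < a)) := by
  ext i
  simp only [Finset.mem_filter, Finset.mem_univ, true_and, Finset.mem_insert]
  rcases eq_or_ne i j with rfl | hi
  · simp only [hjb, true_or]
  · rcases hisol i hi with h | h
    · simp only [h, hi, h.trans_le (hja.trans hjb.le), or_true]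
    · have hai : a ≤ tb i := hja.trans (hjb.le.trans (hb.trans h))
      simp only [not_lt.2 (hb.trans h), hi, not_lt.2 hai, or_false]

end Isolated

lemma exp_mul_sum_insert_sub {ι : Type*} [DecidableEq ι] (ρ a δ : ℝ) (tb W : ι → ℝ)
    {B : Finset ι} {j : ι} (hj : j ∉ B) :
    exp (ρ * δ) * ∑ i ∈ insert j B, exp (ρ * (tb i - (a + δ))) * W i
      - ∑ i ∈ B, exp (ρ * (tb i - a)) * W i = exp (ρ * (tb j - a)) * W j := by
  have hshift : ∀ i, exp (ρ * δ) * (exp (ρ * (tb i - (a + δ))) * W i)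
      = exp (ρ * (tb i - a)) * W i := fun i => by
    rw [← mul_assoc, ← exp_add]
    ring_nf
  rw [Finset.sum_insert hj, mul_add, hshift, Finset.mul_sum,
    Finset.sum_congr rfl fun i _ => hshift i, add_sub_cancel_right]

theorem statement6_general
    {H : Type*} [NormedAddCommGroup H] [InnerProductSpace ℝ H] [CompleteSpace H]
    (T : ℝ → H →L[ℝ] H)
    (hTadd : ∀ t s : ℝ, 0 ≤ t → 0 ≤ s → T (t + s) = (T t).comp (T s))
    (hTcont : ∀ v : H, ContinuousOn (fun t => T t v) (Set.Ici 0))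
    (ρ β : ℝ) (hβ : 0 < β)
    (N : ℕ) (tb : Fin N → ℝ) (hb : Fin N → H)
    (htmono : StrictMono tb)
    (htgap : ∀ (i : ℕ) (h1 : i + 1 < N),
      tb ⟨i + 1, h1⟩ - tb ⟨i, Nat.lt_of_succ_lt h1⟩ ≥ 4 * β)
    (u₀ : H) (η : ℝ → H) (u : ℝ → H)
    (hu : ∀ t' : ℝ, 0 ≤ t' → u t' = T t' u₀
      + (∑ j ∈ Finset.univ.filter (fun j => tb j < t'),
          ∫ s in (tb j)..t', Real.exp (-ρ * (s - tb j)) • T (t' - s) (hb j))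
      + ∫ s in (0:ℝ)..t', T (t' - s) (η s))
    (g : H)
    (ν₁ ν₂ : ℕ → ℝ)
    (F : ℕ → ℝ)
    (hF : ∀ n : ℕ, F n =
      (⟪u (((n:ℝ) + 1) * β), g⟫ - ⟪T β (u ((n:ℝ) * β)), g⟫) / β
      + ν₁ (n + 1) - ν₂ n)
    (hη0 : ∀ t : ℝ, η t = 0) (hν₁0 : ∀ n, ν₁ n = 0) (hν₂0 : ∀ n, ν₂ n = 0)
    (n : ℕ) (hn : 1 ≤ n) (j : Fin N)
    (htj1 : ((n:ℝ) + 1) * β ≤ tb j) (htj2 : tb j < ((n:ℝ) + 2) * β) :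
    Real.exp (3 * ρ * β) * F (n + 2) - F (n - 1)
      = (1 / β) * ∫ s in (0:ℝ)..β,
          Real.exp (ρ * (tb j - ((n:ℝ) - 1) * β - s)) * ⟪T (β - s) (hb j), g⟫ := by
  have hu' (t' : ℝ) (ht' : 0 ≤ t') : u t' = T t' u₀
      + ∑ i ∈ Finset.univ.filter (fun i => tb i < t'), burstResponse T ρ (tb i) (hb i) t' := by
    simpa only [hη0, map_zero, intervalIntegral.integral_zero, add_zero, burstResponse]
      using hu t' ht'
  have hisol (i : Fin N) (hi : i ≠ j) : tb i < ((n:ℝ) - 1) * β ∨ ((n:ℝ) + 3) * β ≤ tb i := by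
    rcases lt_or_gt_of_ne hi with hij | hji
    · exact Or.inl (by linarith [htmono.add_le_of_lt_of_gap htgap hij])
    · exact Or.inr (by linarith [htmono.add_le_of_lt_of_gap htgap hji])
  have hwindow (m : ℕ) (r : ℝ) (hr : (m:ℝ) = r) (hquiet : ∀ i, tb i ∉ Set.Ico (r * β) (r * β + β)) :
      F m = (∑ i ∈ Finset.univ.filter (fun i => tb i < r * β),
        exp (ρ * (tb i - r * β)) * ⟪burstResponse T ρ 0 (hb i) β, g⟫) / β := by
    rw [hF, hν₁0, hν₂0, add_zero, sub_zero, hr, add_one_mul, ← inner_sub_left,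
      inner_add_sub_semigroup_eq_sum hTadd hTcont hβ.le tb hb u₀ u hu' g
        (by rw [← hr]; positivity) hquiet]
  have hlate := hwindow (n + 2) (n + 2) (by push_cast; ring)
    (notMem_Ico_of_isolated hisol (by linarith) (by linarith) fun h => by linarith [h.1])
  have hearly := hwindow (n - 1) (n - 1) (by rw [Nat.cast_sub hn, Nat.cast_one])
    (notMem_Ico_of_isolated hisol le_rfl (by linarith) fun h => by linarith [h.2])
  have hsum := exp_mul_sum_insert_sub ρ (((n:ℝ) - 1) * β) (3 * β) tb
    (fun i => ⟪burstResponse T ρ 0 (hb i) β, g⟫)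
    (B := Finset.univ.filter (fun i => tb i < ((n:ℝ) - 1) * β)) (j := j)
    (by simp only [Finset.mem_filter, Finset.mem_univ, true_and, not_lt]; linarith)
  rw [show ((n:ℝ) - 1) * β + 3 * β = ((n:ℝ) + 2) * β by ring] at hsum
  rw [hlate, hearly, filter_lt_eq_insert_of_isolated hisol (by linarith) (by linarith) htj2,
    ← exp_mul_inner_burstResponse hTcont ρ β _ hβ.le, show 3 * ρ * β = ρ * (3 * β) by ring]
  linear_combination hsum / β

theorem statement6
    {H : Type*} [NormedAddCommGroup H] [InnerProductSpace ℝ H] [CompleteSpace H]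
    (T : ℝ → H →L[ℝ] H)
    (hT0 : T 0 = ContinuousLinearMap.id ℝ H)
    (hTadd : ∀ t s : ℝ, 0 ≤ t → 0 ≤ s → T (t + s) = (T t).comp (T s))
    (hTcont : ∀ v : H, ContinuousOn (fun t => T t v) (Set.Ici 0))
    (ρ β : ℝ) (hρ : 0 < ρ) (hβ : 0 < β)
    (N : ℕ) (tb : Fin N → ℝ) (hb : Fin N → H)
    (htpos : ∀ j, 0 < tb j) (htmono : StrictMono tb)
    (htgap : ∀ (i : ℕ) (h1 : i + 1 < N),
      tb ⟨i + 1, h1⟩ - tb ⟨i, Nat.lt_of_succ_lt h1⟩ ≥ 4 * β)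
    (u₀ : H) (η : ℝ → H) (u : ℝ → H)
    (hu : ∀ t' : ℝ, 0 ≤ t' → u t' = T t' u₀
      + (∑ j ∈ Finset.univ.filter (fun j => tb j < t'),
          ∫ s in (tb j)..t', Real.exp (-ρ * (s - tb j)) • T (t' - s) (hb j))
      + ∫ s in (0:ℝ)..t', T (t' - s) (η s))
    (g : H) (σ : ℝ) (hσ : 0 ≤ σ)
    (ν₁ ν₂ : ℕ → ℝ) (hν₁ : ∀ n, |ν₁ n| ≤ σ) (hν₂ : ∀ n, |ν₂ n| ≤ σ)
    (F : ℕ → ℝ)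
    (hF : ∀ n : ℕ, F n =
      (⟪u (((n:ℝ) + 1) * β), g⟫ - ⟪T β (u ((n:ℝ) * β)), g⟫) / β
      + ν₁ (n + 1) - ν₂ n)
    (hη0 : ∀ t : ℝ, η t = 0) (hν₁0 : ∀ n, ν₁ n = 0) (hν₂0 : ∀ n, ν₂ n = 0)
    (n : ℕ) (hn : 1 ≤ n) (j : Fin N)
    (htj1 : ((n:ℝ) + 1) * β ≤ tb j) (htj2 : tb j < ((n:ℝ) + 2) * β) :
    Real.exp (3 * ρ * β) * F (n + 2) - F (n - 1)
      = (1 / β) * ∫ s in (0:ℝ)..β,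
          Real.exp (ρ * (tb j - ((n:ℝ) - 1) * β - s)) * ⟪T (β - s) (hb j), g⟫ :=
  statement6_general T hTadd hTcont ρ β hβ N tb hb htmono htgap u₀ η u hu g ν₁ ν₂ F hF hη0 hν₁0 hν₂0
    n hn j htj1 htj2
end
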